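/- Let d > 0 be a real number. The function H : ℝ → ℝ defined by H(x) = x·(log(4x/(e²·d)))² for 0 ≤ x ≤ d/4 (with H(0) = 0) and H(x) = d for x > d/4 is concave on [0, ∞). -/

import Mathlib

/-!
With `t = 4x / (e² d)` the function is `(e² d / 4) · φ (min t e⁻²)` for `φ t = t · (log t)²`.
Since `φ' t = log t · (log t + 2)`, on `(0, e⁻¹]` the derivative is decreasing in `t` (a decreasing
function of `log t ≤ -1`), and on `(0, e⁻²]` it is nonnegative. So `φ` is concave and nondecreasing
on `[0, e⁻²]`, and composing it with the concave map `t ↦ min t e⁻²` keeps concavity.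
-/

open Real Set

lemma hasDerivAt_mul_log_sq {t : ℝ} (ht : t ≠ 0) :
    HasDerivAt (fun t => t * log t ^ 2) (log t ^ 2 + 2 * log t) t := by
  refine ((hasDerivAt_id' t).fun_mul ((hasDerivAt_log ht).fun_pow 2)).congr_deriv ?_
  field_simp
  ring

lemma continuousOn_mul_log_sq : ContinuousOn (fun t => t * log t ^ 2) (Ici 0) := by
  intro t ht
  rcases (mem_Ici.mp ht).eq_or_lt with rfl | ht_pos
  · rw [← continuousWithinAt_Ioi_iff_Ici, ContinuousWithinAt, zero_mul]
    -- `t · (log t)² = (log t · √t)²` and `log t · √t → 0` as `t → 0⁺`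
    have hlim := (tendsto_log_mul_rpow_nhdsGT_zero one_half_pos).pow 2
    rw [zero_pow two_ne_zero] at hlim
    refine hlim.congr' ?_
    filter_upwards [self_mem_nhdsWithin] with t (ht : 0 < t)
    rw [mul_pow, ← rpow_mul_natCast ht.le]
    norm_num
    ring
  · exact (hasDerivAt_mul_log_sq ht_pos.ne').continuousAt.continuousWithinAt

lemma concaveOn_mul_log_sq : ConcaveOn ℝ (Icc 0 (exp (-1))) (fun t => t * log t ^ 2) := by
  refine AntitoneOn.concaveOn_of_deriv (convex_Icc _ _)
    (continuousOn_mul_log_sq.mono Icc_subset_Ici_self) ?_ ?_ <;> rw [interior_Icc]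
  · exact fun t ht => (hasDerivAt_mul_log_sq ht.1.ne').differentiableAt.differentiableWithinAt
  · intro s hs t ht hst
    rw [(hasDerivAt_mul_log_sq hs.1.ne').deriv, (hasDerivAt_mul_log_sq ht.1.ne').deriv]
    have hlog : log s ≤ log t := log_le_log hs.1 hst
    have hlog_t : log t ≤ -1 := (log_le_log ht.1 ht.2.le).trans_eq (log_exp _)
    nlinarith

lemma monotoneOn_mul_log_sq : MonotoneOn (fun t => t * log t ^ 2) (Icc 0 (exp (-2))) := by
  refine monotoneOn_of_deriv_nonneg (convex_Icc _ _)
    (continuousOn_mul_log_sq.mono Icc_subset_Ici_self) ?_ ?_ <;> rw [interior_Icc]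
  · exact fun t ht => (hasDerivAt_mul_log_sq ht.1.ne').differentiableAt.differentiableWithinAt
  · intro t ht
    rw [(hasDerivAt_mul_log_sq ht.1.ne').deriv]
    have hlog_t : log t ≤ -2 := (log_le_log ht.1 ht.2.le).trans_eq (log_exp _)
    nlinarith

lemma concaveOn_mul_log_sq_comp_min {a : ℝ} (ha : 0 ≤ a) :
    ConcaveOn ℝ (Ici 0) (fun x => min (a * x) (exp (-2)) * log (min (a * x) (exp (-2))) ^ 2) := by
  have hmin : ConcaveOn ℝ (Ici 0) (fun x => min (a * x) (exp (-2))) :=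
    ((concaveOn_id (convex_Ici 0)).smul ha).inf (concaveOn_const _ (convex_Ici 0))
  have himage : (fun x => min (a * x) (exp (-2))) '' Ici 0 ⊆ Icc 0 (exp (-2)) := by
    rintro _ ⟨x, hx, rfl⟩
    exact ⟨le_min (mul_nonneg ha hx) (exp_pos _).le, min_le_right _ _⟩
  have hcc : Icc 0 (exp (-2)) ⊆ Icc 0 (exp (-1)) :=
    Icc_subset_Icc_right (exp_le_exp.mpr (by norm_num))
  have himage_convex : Convex ℝ ((fun x => min (a * x) (exp (-2))) '' Ici 0) :=
    (isPreconnected_Ici.image _ (by fun_prop)).ordConnected.convex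
  exact (concaveOn_mul_log_sq.subset (himage.trans hcc) himage_convex).comp
    hmin (monotoneOn_mul_log_sq.mono himage)

/-- The function `H` equal to `x · (log (4x / (e² d)))²` for `0 ≤ x ≤ d/4`
(with `H 0 = 0`, which holds with Lean's convention `log 0 = 0`) and equal to `d`
for `x > d/4` is concave on `[0, ∞)`. -/
theorem concaveOn_H (d : ℝ) (hd : 0 < d) :
    ConcaveOn ℝ (Set.Ici (0 : ℝ))
      (fun x : ℝ =>
        if x ≤ d / 4 then x * Real.log (4 * x / (Real.exp 1 ^ 2 * d)) ^ 2 else d) := by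
  set b := exp 1 ^ 2 * d / 4 with hb_def
  have hb : 0 < b := by positivity
  have hb_exp : b * exp (-2) = d / 4 := by
    have : exp 1 ^ 2 * exp (-2) = 1 := by rw [← exp_nat_mul, ← exp_add]; norm_num
    linear_combination d / 4 * this
  refine ((concaveOn_mul_log_sq_comp_min (inv_nonneg.mpr hb.le)).smul hb.le).congr fun x _ => ?_
  have hx : 4 * x / (exp 1 ^ 2 * d) = b⁻¹ * x := by rw [hb_def]; field_simp
  simp only [smul_eq_mul, hx]
  split_ifs with hxd
  · rw [min_eq_left ((inv_mul_le_iff₀ hb).mpr (hxd.trans_eq hb_exp.symm))]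
    field_simp
  · rw [min_eq_right ((le_inv_mul_iff₀ hb).mpr (hb_exp.trans_le (not_le.mp hxd).le)), log_exp]
    linear_combination 4 * hb_exp
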